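/- Let Y ∈ W^n_p([a,b];ℂ^{m×m}) with n ≥ 1 be such that Y(a) = I_m and det Y(t) ≠ 0 for all t ∈ [a,b]. Then A(t) := −Y'(t)Y(t)⁻¹ defines a matrix function with entries in W^{n-1}_p([a,b];ℂ), and Y is the unique solution of the Cauchy problem Y' + AY = 0, Y(a) = I_m. -/

import Mathlib

/-!
Write `Y' = G` entrywise, so `G ∈ W^{n-1}_p`. The entries of `Y⁻¹` are cofactors of `Y` divided
by `det Y`, and `W^n_p` (`n ≥ 1`) is closed under sums, products and inversion of nowhere vanishing
functions, so `Y⁻¹ ∈ W^n_p`. A `W^{n-1}_p` function times a `W^n_p` function lies in `W^{n-1}_p`,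
hence `A = -Y'Y⁻¹ ∈ W^{n-1}_p`. Since `AY = -Y'`, `Y` solves the integral equation; uniqueness is
Gronwall's lemma for `ψ ≤ ∫ w ψ` with an integrable weight `w`, applied to the entrywise `ℓ¹` norm
of the difference of two solutions.

The analytic input is the product rule `(fg)' = f'g + fg'` for primitives of integrable functions,
which follows from Fubini on the two triangles of `(a,t]²`, and the same Gronwall lemma. The latter
also gives inversion: if `d' = u` and `h = d(a)⁻¹ - ∫ u/d²`, then `hd - 1 = ∫ (u/d)(hd - 1)`, so
`h = 1/d`.
-/

open MeasureTheory Set Filter Topology Matrix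
open scoped ENNReal NNReal

noncomputable section

/-- Membership in the Sobolev space `W^n_p([a,b]; E)`: for `n = 0` this is `L_p`,
and for `n + 1` the function is absolutely continuous on `[a,b]` (it is the integral of
its derivative `g`) with derivative in `W^n_p`. -/
def MemW {E : Type*} [NormedAddCommGroup E] [NormedSpace ℝ E] [CompleteSpace E]
    (p : ℝ≥0∞) (a b : ℝ) : ℕ → (ℝ → E) → Prop
  | 0, f => MemLp f p (volume.restrict (Icc a b))
  | n + 1, f => ∃ g : ℝ → E,
      (∀ t ∈ Icc a b, f t = f a + ∫ s in a..t, g s) ∧ MemW p a b n g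

/-- `Y` is the matricant of the system `Y' + A Y = 0`, `Y(a) = I`: it is continuous on
`[a,b]` and satisfies the equivalent integral equation entrywise. -/
def IsMatricant {m : ℕ} (a b : ℝ) (A Y : ℝ → Matrix (Fin m) (Fin m) ℂ) : Prop :=
  (∀ i j, ContinuousOn (fun t => Y t i j) (Icc a b)) ∧ Y a = 1 ∧
    ∀ i j, ∀ t ∈ Icc a b,
      Y t i j = (1 : Matrix (Fin m) (Fin m) ℂ) i j - ∫ s in a..t, (A s * Y s) i j

/-- Entrywise derivative of a matrix-valued function on `[a,b]`. -/
def matDeriv {m : ℕ} (a b : ℝ) (Y : ℝ → Matrix (Fin m) (Fin m) ℂ) (t : ℝ) :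
    Matrix (Fin m) (Fin m) ℂ :=
  Matrix.of fun i j => derivWithin (fun s => Y s i j) (Icc a b) t

/-- The differential expression `L y = y' + A y` (derivative taken within `[a,b]`). -/
def Lop {m : ℕ} (a b : ℝ) (A : ℝ → Matrix (Fin m) (Fin m) ℂ) (y : ℝ → Fin m → ℂ)
    (t : ℝ) : Fin m → ℂ :=
  (fun i => derivWithin (fun s => y s i) (Icc a b) t) + A t *ᵥ y t

/-- A vector-valued function belongs to `W^n_p([a,b]; ℂ^m)` iff each component does. -/
def InW {m : ℕ} (p : ℝ≥0∞) (a b : ℝ) (n : ℕ) (y : ℝ → Fin m → ℂ) : Prop :=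
  ∀ i, MemW p a b n (fun t => y t i)

section Primitive

variable {E : Type*} [NormedAddCommGroup E] {a b : ℝ}

theorem intervalIntegrable_of_integrableOn_Icc {f : ℝ → E} (hf : IntegrableOn f (Icc a b))
    {c d : ℝ} (hc : c ∈ Icc a b) (hd : d ∈ Icc a b) : IntervalIntegrable f volume c d :=
  (hf.mono_set (uIcc_subset_Icc hc hd)).intervalIntegrable

variable [NormedSpace ℝ E]

def IsPrimitiveOn (f g : ℝ → E) (a b : ℝ) : Prop :=
  ∀ t ∈ Icc a b, f t = f a + ∫ s in a..t, g s

theorem isPrimitiveOn_integral (c : E) (g : ℝ → E) :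
    IsPrimitiveOn (fun t => c + ∫ s in a..t, g s) g a b := by
  intro t _
  simp

theorem IsPrimitiveOn.congr (hab : a ≤ b) {f f' g : ℝ → E} (hf : IsPrimitiveOn f g a b)
    (hff' : ∀ t ∈ Icc a b, f t = f' t) : IsPrimitiveOn f' g a b := fun t ht => by
  rw [← hff' t ht, ← hff' a (left_mem_Icc.2 hab), hf t ht]

theorem continuousOn_intervalIntegral_of_integrableOn (hab : a ≤ b) {g : ℝ → E}
    (hg : IntegrableOn g (Icc a b)) : ContinuousOn (fun t => ∫ s in a..t, g s) (Icc a b) := by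
  have hprim := intervalIntegral.continuousOn_primitive_interval (μ := volume)
    (hg.mono_set (uIcc_subset_Icc (left_mem_Icc.2 hab) (right_mem_Icc.2 hab)))
  rwa [uIcc_of_le hab] at hprim

theorem IsPrimitiveOn.continuousOn (hab : a ≤ b) {f g : ℝ → E}
    (hf : IsPrimitiveOn f g a b) (hg : IntegrableOn g (Icc a b)) : ContinuousOn f (Icc a b) :=
  (continuousOn_const.add (continuousOn_intervalIntegral_of_integrableOn hab hg)).congr hf

theorem IsPrimitiveOn.add (hab : a ≤ b) {f g u v : ℝ → E} (hf : IsPrimitiveOn f u a b)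
    (hg : IsPrimitiveOn g v a b) (hu : IntegrableOn u (Icc a b)) (hv : IntegrableOn v (Icc a b)) :
    IsPrimitiveOn (fun t => f t + g t) (fun s => u s + v s) a b := fun t ht => by
  have ha := left_mem_Icc.2 hab
  beta_reduce
  rw [intervalIntegral.integral_add (intervalIntegrable_of_integrableOn_Icc hu ha ht)
    (intervalIntegrable_of_integrableOn_Icc hv ha ht), hf t ht, hg t ht]
  abel

theorem IsPrimitiveOn.neg {f u : ℝ → E} (hf : IsPrimitiveOn f u a b) :
    IsPrimitiveOn (fun t => -f t) (fun s => -u s) a b := fun t ht => by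
  beta_reduce
  rw [intervalIntegral.integral_neg, hf t ht]
  abel

variable [CompleteSpace E]

theorem IsPrimitiveOn.ae_derivWithin_eq {f g : ℝ → E}
    (hf : IsPrimitiveOn f g a b) (hg : IntegrableOn g (Icc a b)) :
    derivWithin f (Icc a b) =ᵐ[volume.restrict (Icc a b)] g := by
  rcases lt_or_ge b a with hba | hab
  · simp [Icc_eq_empty_of_lt hba, EventuallyEq]
  refine ae_restrict_of_ae_eq_of_ae_restrict Ioo_ae_eq_Icc ?_
  have hint := intervalIntegrable_of_integrableOn_Icc hg (left_mem_Icc.2 hab) (right_mem_Icc.2 hab)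
  refine (ae_restrict_iff' measurableSet_Ioo).2 ?_
  filter_upwards [hint.ae_hasDerivAt_integral] with t hderiv ht
  have hnhds : Icc a b ∈ 𝓝 t := Icc_mem_nhds ht.1 ht.2
  have hft : HasDerivAt f (g t) t :=
    ((hderiv (Icc_subset_uIcc (Ioo_subset_Icc_self ht)) a left_mem_uIcc).const_add
      (f a)).congr_of_eventuallyEq (eventually_of_mem hnhds hf)
  rw [derivWithin_of_mem_nhds hnhds, hft.deriv]

theorem IsPrimitiveOn.derivWithin_eq_of_continuousOn (hab : a < b) {f g : ℝ → E}
    (hf : IsPrimitiveOn f g a b) (hg : ContinuousOn g (Icc a b)) {t : ℝ} (ht : t ∈ Icc a b) :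
    derivWithin f (Icc a b) t = g t := by
  have : Fact (t ∈ Icc a b) := ⟨ht⟩
  have hprim : HasDerivWithinAt (fun u => ∫ s in a..u, g s) (g t) (Icc a b) t :=
    intervalIntegral.integral_hasDerivWithinAt_right
      (intervalIntegrable_of_integrableOn_Icc (hg.integrableOn_Icc) (left_mem_Icc.2 hab.le) ht)
      (hg.stronglyMeasurableAtFilter_nhdsWithin measurableSet_Icc t) (hg t ht)
  exact ((hprim.const_add (f a)).congr hf (hf t ht)).derivWithin (uniqueDiffOn_Icc hab t ht)

theorem IsPrimitiveOn.derivWithin {f g : ℝ → E} (hf : IsPrimitiveOn f g a b)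
    (hg : IntegrableOn g (Icc a b)) : IsPrimitiveOn f (derivWithin f (Icc a b)) a b := by
  intro t ht
  rw [hf t ht, intervalIntegral.integral_of_le ht.1, intervalIntegral.integral_of_le ht.1]
  congr 1
  exact integral_congr_ae (ae_restrict_of_ae_restrict_of_subset
    (Ioc_subset_Icc_self.trans (Icc_subset_Icc_right ht.2)) (hf.ae_derivWithin_eq hg).symm)

end Primitive

section ProductRule

variable {K : Type*} [RCLike K] {a b : ℝ}

theorem setIntegral_Ioc_mul_setIntegral_Ioc {t : ℝ} {u v : ℝ → K}
    (hu : IntegrableOn u (Ioc a t)) (hv : IntegrableOn v (Ioc a t)) :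
    (∫ s in Ioc a t, u s) * (∫ s in Ioc a t, v s)
      = (∫ s in Ioc a t, u s * ∫ r in Ioc a s, v r)
        + ∫ s in Ioc a t, (∫ r in Ioc a s, u r) * v s := by
  set μ := volume.restrict (Ioc a t) with hμ
  have hprod : Integrable (fun z : ℝ × ℝ => u z.1 * v z.2) (μ.prod μ) := hu.mul_prod hv
  set T := {z : ℝ × ℝ | z.2 ≤ z.1}
  have hT : MeasurableSet T := measurableSet_le measurable_snd measurable_fst
  have hlower : ∫ z in T, u z.1 * v z.2 ∂(μ.prod μ)
      = ∫ s in Ioc a t, u s * ∫ r in Ioc a s, v r := by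
    rw [← integral_indicator hT, integral_prod _ (hprod.indicator hT)]
    refine integral_congr_ae ?_
    filter_upwards [ae_restrict_mem measurableSet_Ioc] with s hs
    have hslice : (fun r => T.indicator (fun z : ℝ × ℝ => u z.1 * v z.2) (s, r))
        = (Iic s).indicator (fun r => u s * v r) := by
      funext r
      by_cases h : r ≤ s <;> simp [T, h]
    have hset : Iic s ∩ Ioc a t = Ioc a s := by
      ext r
      simp only [mem_inter_iff, mem_Iic, mem_Ioc]
      exact ⟨fun ⟨h1, h2, _⟩ => ⟨h2, h1⟩, fun ⟨h1, h2⟩ => ⟨h2, h1, h2.trans hs.2⟩⟩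
    rw [hslice, integral_indicator measurableSet_Iic, hμ,
      Measure.restrict_restrict measurableSet_Iic, hset, integral_const_mul]
  have hupper : ∫ z in Tᶜ, u z.1 * v z.2 ∂(μ.prod μ)
      = ∫ s in Ioc a t, (∫ r in Ioc a s, u r) * v s := by
    rw [← integral_indicator hT.compl, integral_prod_symm _ (hprod.indicator hT.compl)]
    refine integral_congr_ae ?_
    filter_upwards [ae_restrict_mem measurableSet_Ioc] with r hr
    have hslice : (fun s => Tᶜ.indicator (fun z : ℝ × ℝ => u z.1 * v z.2) (s, r))
        = (Iio r).indicator (fun s => u s * v r) := by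
      funext s
      by_cases h : s < r
      · simp [T, h, not_le.2 h]
      · simp [T, h, not_lt.1 h]
    have hset : Iio r ∩ Ioc a t = Ioo a r := by
      ext s
      simp only [mem_inter_iff, mem_Iio, mem_Ioc, mem_Ioo]
      exact ⟨fun ⟨h1, h2, _⟩ => ⟨h2, h1⟩, fun ⟨h1, h2⟩ => ⟨h2, h1, h2.le.trans hr.2⟩⟩
    rw [hslice, integral_indicator measurableSet_Iio, hμ,
      Measure.restrict_restrict measurableSet_Iio, hset, ← integral_Ioc_eq_integral_Ioo,
      integral_mul_const]
  rw [← integral_prod_mul u v, ← integral_add_compl hT hprod, hlower, hupper]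

theorem integral_mul_integral {t : ℝ} (hat : a ≤ t) {u v : ℝ → K}
    (hu : IntervalIntegrable u volume a t) (hv : IntervalIntegrable v volume a t) :
    (∫ s in a..t, u s) * (∫ s in a..t, v s)
      = ∫ s in a..t, (u s * (∫ r in a..s, v r) + (∫ r in a..s, u r) * v s) := by
  have hU := intervalIntegral.continuousOn_primitive_interval' hu left_mem_uIcc
  have hV := intervalIntegral.continuousOn_primitive_interval' hv left_mem_uIcc
  rw [intervalIntegral.integral_add (hu.mul_continuousOn hV) (hv.continuousOn_mul hU),
    intervalIntegral.integral_of_le hat, intervalIntegral.integral_of_le hat,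
    intervalIntegral.integral_of_le hat, intervalIntegral.integral_of_le hat,
    setIntegral_Ioc_mul_setIntegral_Ioc ((intervalIntegrable_iff_integrableOn_Ioc_of_le hat).1 hu)
      ((intervalIntegrable_iff_integrableOn_Ioc_of_le hat).1 hv)]
  congr 1 <;> refine setIntegral_congr_fun measurableSet_Ioc fun s hs => ?_ <;>
    simp only [intervalIntegral.integral_of_le hs.1.le]

theorem IsPrimitiveOn.mul (hab : a ≤ b) {f g u v : ℝ → K}
    (hf : IsPrimitiveOn f u a b) (hg : IsPrimitiveOn g v a b)
    (hu : IntegrableOn u (Icc a b)) (hv : IntegrableOn v (Icc a b)) :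
    IsPrimitiveOn (fun t => f t * g t) (fun s => u s * g s + f s * v s) a b := by
  intro t ht
  show f t * g t = f a * g a + _
  have ha : a ∈ Icc a b := left_mem_Icc.2 hab
  have hsub : uIcc a t ⊆ Icc a b := uIcc_subset_Icc ha ht
  set U : ℝ → K := fun x => ∫ s in a..x, u s
  set V : ℝ → K := fun x => ∫ s in a..x, v s
  have iu : IntervalIntegrable u volume a t := intervalIntegrable_of_integrableOn_Icc hu ha ht
  have iv : IntervalIntegrable v volume a t := intervalIntegrable_of_integrableOn_Icc hv ha ht
  have hUc : ContinuousOn U (uIcc a t) :=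
    (continuousOn_intervalIntegral_of_integrableOn hab hu).mono hsub
  have hVc : ContinuousOn V (uIcc a t) :=
    (continuousOn_intervalIntegral_of_integrableOn hab hv).mono hsub
  have hsplit : ∫ s in a..t, (u s * g s + f s * v s)
      = ∫ s in a..t, ((u s * g a + f a * v s) + (u s * V s + U s * v s)) := by
    refine intervalIntegral.integral_congr fun s hs => ?_
    simp only [hf s (hsub hs), hg s (hsub hs), U, V]
    ring
  rw [hsplit, intervalIntegral.integral_add ((iu.mul_const _).add (iv.const_mul _))
      ((iu.mul_continuousOn hVc).add (iv.continuousOn_mul hUc)),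
    intervalIntegral.integral_add (iu.mul_const _) (iv.const_mul _),
    intervalIntegral.integral_mul_const, intervalIntegral.integral_const_mul,
    ← integral_mul_integral ht.1 iu iv, hf t ht, hg t ht]
  ring

end ProductRule

section Gronwall

variable {a b : ℝ} {w : ℝ → ℝ}

theorem isPrimitiveOn_pow_integral (hab : a ≤ b) (hw : IntegrableOn w (Icc a b)) (k : ℕ) :
    IsPrimitiveOn (fun t => (∫ s in a..t, w s) ^ (k + 1))
      (fun s => (k + 1) * (w s * (∫ r in a..s, w r) ^ k)) a b := by
  have hW : IsPrimitiveOn (fun t => ∫ s in a..t, w s) w a b :=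
    (isPrimitiveOn_integral 0 w).congr hab fun _ _ => zero_add _
  have hWc := continuousOn_intervalIntegral_of_integrableOn hab hw
  induction k with
  | zero => simpa using hW
  | succ k ih =>
    intro t ht
    have h := hW.mul hab ih hw ((hw.mul_continuousOn (hWc.pow k) isCompact_Icc).const_mul _) t ht
    simp only [← pow_succ'] at h
    beta_reduce
    rw [h]
    congr 1
    refine intervalIntegral.integral_congr fun s _ => ?_
    push_cast
    ring

theorem le_mul_pow_div_factorial_of_le_integral_mul (hab : a ≤ b) {ψ : ℝ → ℝ} {C : ℝ}
    (hψ : ContinuousOn ψ (Icc a b)) (hψC : ∀ t ∈ Icc a b, ψ t ≤ C)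
    (hw : IntegrableOn w (Icc a b)) (hw0 : ∀ s ∈ Icc a b, 0 ≤ w s)
    (hle : ∀ t ∈ Icc a b, ψ t ≤ ∫ s in a..t, w s * ψ s) (k : ℕ) :
    ∀ t ∈ Icc a b, ψ t ≤ C * (∫ s in a..t, w s) ^ k / k.factorial := by
  set W : ℝ → ℝ := fun t => ∫ s in a..t, w s
  have ha : a ∈ Icc a b := left_mem_Icc.2 hab
  have hWc : ContinuousOn W (Icc a b) := continuousOn_intervalIntegral_of_integrableOn hab hw
  induction k with
  | zero => simpa using hψC
  | succ k ih =>
    intro t ht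
    have hsub : Icc a t ⊆ Icc a b := Icc_subset_Icc_right ht.2
    have hint : ∀ q : ℝ → ℝ, ContinuousOn q (Icc a b) →
        IntervalIntegrable (fun s => w s * q s) volume a t := fun q hq =>
      intervalIntegrable_of_integrableOn_Icc (hw.mul_continuousOn hq isCompact_Icc) ha ht
    have hpow : ∫ s in a..t, w s * W s ^ k = W t ^ (k + 1) / (k + 1) := by
      have h := isPrimitiveOn_pow_integral hab hw k t ht
      simp only [intervalIntegral.integral_same, zero_pow (Nat.succ_ne_zero k), zero_add,
        intervalIntegral.integral_const_mul] at h
      rw [h]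
      field_simp
      rfl
    calc ψ t ≤ ∫ s in a..t, w s * ψ s := hle t ht
      _ ≤ ∫ s in a..t, w s * (C * W s ^ k / k.factorial) := by
        refine intervalIntegral.integral_mono_on ht.1 (hint ψ hψ)
          (hint _ ((continuousOn_const.mul (hWc.pow k)).div_const _)) fun s hs => ?_
        exact mul_le_mul_of_nonneg_left (ih s (hsub hs)) (hw0 s (hsub hs))
      _ = C / k.factorial * ∫ s in a..t, w s * W s ^ k := by
        rw [← intervalIntegral.integral_const_mul]
        refine intervalIntegral.integral_congr fun s _ => ?_
        ring
      _ = C * W t ^ (k + 1) / (k + 1).factorial := by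
        rw [hpow, Nat.factorial_succ]
        push_cast
        field_simp

theorem eq_zero_of_le_integral_mul (hab : a ≤ b) {ψ : ℝ → ℝ}
    (hψ : ContinuousOn ψ (Icc a b)) (hψ0 : ∀ t ∈ Icc a b, 0 ≤ ψ t)
    (hw : IntegrableOn w (Icc a b)) (hw0 : ∀ s ∈ Icc a b, 0 ≤ w s)
    (hle : ∀ t ∈ Icc a b, ψ t ≤ ∫ s in a..t, w s * ψ s) :
    ∀ t ∈ Icc a b, ψ t = 0 := by
  intro t ht
  obtain ⟨C, hC⟩ := isCompact_Icc.exists_bound_of_continuousOn hψ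
  have hψC : ∀ t ∈ Icc a b, ψ t ≤ C := fun t ht => (le_abs_self _).trans (hC t ht)
  have hWt : 0 ≤ ∫ s in a..t, w s :=
    intervalIntegral.integral_nonneg ht.1 fun s hs => hw0 s ⟨hs.1, hs.2.trans ht.2⟩
  have hWb : ∫ s in a..t, w s ≤ ∫ s in a..b, w s :=
    intervalIntegral.integral_mono_interval le_rfl ht.1 ht.2
      (ae_restrict_of_forall_mem measurableSet_Ioc fun s hs => hw0 s (Ioc_subset_Icc_self hs))
      (intervalIntegrable_of_integrableOn_Icc hw (left_mem_Icc.2 hab) (right_mem_Icc.2 hab))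
  have hlim : Tendsto (fun k : ℕ => C * (∫ s in a..b, w s) ^ k / k.factorial) atTop (𝓝 0) := by
    simpa [mul_div_assoc] using
      (FloorSemiring.tendsto_pow_div_factorial_atTop (∫ s in a..b, w s)).const_mul C
  have hbound : ∀ k : ℕ, ψ t ≤ C * (∫ s in a..b, w s) ^ k / k.factorial := fun k => by
    refine (le_mul_pow_div_factorial_of_le_integral_mul hab hψ hψC hw hw0 hle k t ht).trans ?_
    have hC0 : 0 ≤ C := (hψ0 t ht).trans (hψC t ht)
    gcongr
  exact le_antisymm (ge_of_tendsto' hlim hbound) (hψ0 t ht)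

end Gronwall

section Inverse

variable {K : Type*} [RCLike K] {a b : ℝ}

theorem eq_zero_of_eq_integral_mul (hab : a ≤ b) {φ κ : ℝ → K}
    (hφ : ContinuousOn φ (Icc a b)) (hκ : IntegrableOn κ (Icc a b))
    (heq : ∀ t ∈ Icc a b, φ t = ∫ s in a..t, κ s * φ s) : ∀ t ∈ Icc a b, φ t = 0 := by
  suffices h : ∀ t ∈ Icc a b, ‖φ t‖ = 0 from fun t ht => norm_eq_zero.1 (h t ht)
  refine eq_zero_of_le_integral_mul hab hφ.norm (fun _ _ => norm_nonneg _) hκ.norm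
    (fun _ _ => norm_nonneg _) fun t ht => ?_
  calc ‖φ t‖ = ‖∫ s in a..t, κ s * φ s‖ := by rw [← heq t ht]
    _ ≤ ∫ s in a..t, ‖κ s * φ s‖ := intervalIntegral.norm_integral_le_integral_norm ht.1
    _ = ∫ s in a..t, ‖κ s‖ * ‖φ s‖ := by simp only [norm_mul]

theorem IsPrimitiveOn.inv (hab : a ≤ b) {d u : ℝ → K} (hd : IsPrimitiveOn d u a b)
    (hu : IntegrableOn u (Icc a b)) (hne : ∀ t ∈ Icc a b, d t ≠ 0) :
    IsPrimitiveOn (fun t => (d t)⁻¹) (fun s => -(u s * ((d s)⁻¹ * (d s)⁻¹))) a b := by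
  have ha := left_mem_Icc.2 hab
  have hdc : ContinuousOn d (Icc a b) := hd.continuousOn hab hu
  have hinvc : ContinuousOn (fun t => (d t)⁻¹) (Icc a b) := hdc.inv₀ hne
  set h' : ℝ → K := fun s => -(u s * ((d s)⁻¹ * (d s)⁻¹))
  have hh'int : IntegrableOn h' (Icc a b) :=
    (hu.mul_continuousOn (hinvc.mul hinvc) isCompact_Icc).neg
  set h : ℝ → K := fun t => (d a)⁻¹ + ∫ s in a..t, h' s
  have hh : IsPrimitiveOn h h' a b := isPrimitiveOn_integral _ _
  have hφ : ∀ t ∈ Icc a b, h t * d t - 1 = ∫ s in a..t, u s * (d s)⁻¹ * (h s * d s - 1) := by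
    intro t ht
    have ha1 : h a * d a = 1 := by simp [h, inv_mul_cancel₀ (hne a ha)]
    have hprod := hh.mul hab hd hh'int hu t ht
    beta_reduce at hprod
    rw [hprod, ha1, add_sub_cancel_left]
    refine intervalIntegral.integral_congr fun s hs => ?_
    have := hne s (uIcc_subset_Icc ha ht hs)
    simp only [h']
    field_simp
    ring
  have hzero := eq_zero_of_eq_integral_mul hab
    (((hh.continuousOn hab hh'int).mul hdc).sub continuousOn_const)
    (hu.mul_continuousOn hinvc isCompact_Icc) hφ
  exact hh.congr hab fun t ht => eq_inv_of_mul_eq_one_left (sub_eq_zero.1 (hzero t ht))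

end Inverse

section Sobolev

variable {E : Type*} [NormedAddCommGroup E] [NormedSpace ℝ E] [CompleteSpace E]
  {p : ℝ≥0∞} {a b : ℝ}

theorem memW_zero_iff {f : ℝ → E} : MemW p a b 0 f ↔ MemLp f p (volume.restrict (Icc a b)) :=
  Iff.rfl

theorem memW_succ_iff {n : ℕ} {f : ℝ → E} :
    MemW p a b (n + 1) f ↔ ∃ g, IsPrimitiveOn f g a b ∧ MemW p a b n g :=
  Iff.rfl

theorem memW_zero_of_continuousOn {f : ℝ → E} (hf : ContinuousOn f (Icc a b)) :
    MemW p a b 0 f := by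
  obtain ⟨C, hC⟩ := isCompact_Icc.exists_bound_of_continuousOn hf
  exact MemLp.of_bound (hf.aestronglyMeasurable measurableSet_Icc) C
    (ae_restrict_of_forall_mem measurableSet_Icc hC)

theorem memW_const (c : E) : ∀ n, MemW p a b n (fun _ => c)
  | 0 => memW_zero_of_continuousOn continuousOn_const
  | n + 1 => memW_succ_iff.2 ⟨fun _ => 0, fun t _ => by simp, memW_const 0 n⟩

theorem MemW.integrableOn (hab : a ≤ b) (hp : 1 ≤ p) :
    ∀ {n} {f : ℝ → E}, MemW p a b n f → IntegrableOn f (Icc a b)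
  | 0, _, hf => memLp_one_iff_integrable.1 ((memW_zero_iff.1 hf).mono_exponent hp)
  | _ + 1, _, hf =>
    let ⟨_, hfg, hg⟩ := memW_succ_iff.1 hf
    (hfg.continuousOn hab (hg.integrableOn hab hp)).integrableOn_Icc

theorem MemW.continuousOn (hab : a ≤ b) (hp : 1 ≤ p) {n : ℕ} {f : ℝ → E}
    (hf : MemW p a b (n + 1) f) : ContinuousOn f (Icc a b) :=
  let ⟨_, hfg, hg⟩ := memW_succ_iff.1 hf
  hfg.continuousOn hab (hg.integrableOn hab hp)

theorem MemW.of_succ (hab : a ≤ b) (hp : 1 ≤ p) :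
    ∀ {n} {f : ℝ → E}, MemW p a b (n + 1) f → MemW p a b n f
  | 0, _, hf => memW_zero_of_continuousOn (hf.continuousOn hab hp)
  | _ + 1, _, hf =>
    let ⟨g, hfg, hg⟩ := memW_succ_iff.1 hf
    memW_succ_iff.2 ⟨g, hfg, hg.of_succ hab hp⟩

theorem MemW.congr (hab : a ≤ b) {n : ℕ} {f f' : ℝ → E} (hf : MemW p a b n f)
    (hff' : ∀ t ∈ Icc a b, f t = f' t) : MemW p a b n f' := by
  cases n with
  | zero => exact (memLp_congr_ae (ae_restrict_of_forall_mem measurableSet_Icc hff')).1 hf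
  | succ n =>
    obtain ⟨g, hfg, hg⟩ := memW_succ_iff.1 hf
    exact memW_succ_iff.2 ⟨g, hfg.congr hab hff', hg⟩

theorem MemW.add (hab : a ≤ b) (hp : 1 ≤ p) :
    ∀ {n} {f g : ℝ → E}, MemW p a b n f → MemW p a b n g → MemW p a b n (fun t => f t + g t)
  | 0, _, _, hf, hg => memW_zero_iff.2 ((memW_zero_iff.1 hf).add (memW_zero_iff.1 hg))
  | _ + 1, _, _, hf, hg =>
    let ⟨_, hfu, hu⟩ := memW_succ_iff.1 hf
    let ⟨_, hgv, hv⟩ := memW_succ_iff.1 hg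
    memW_succ_iff.2 ⟨_, hfu.add hab hgv (hu.integrableOn hab hp) (hv.integrableOn hab hp),
      hu.add hab hp hv⟩

theorem MemW.neg : ∀ {n} {f : ℝ → E}, MemW p a b n f → MemW p a b n (fun t => -f t)
  | 0, _, hf => memW_zero_iff.2 (memW_zero_iff.1 hf).neg
  | _ + 1, _, hf =>
    let ⟨_, hfu, hu⟩ := memW_succ_iff.1 hf
    memW_succ_iff.2 ⟨_, hfu.neg, hu.neg⟩

theorem memW_sum {ι : Type*} (hab : a ≤ b) (hp : 1 ≤ p) {n : ℕ} (s : Finset ι)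
    (f : ι → ℝ → E) (hf : ∀ i ∈ s, MemW p a b n (f i)) :
    MemW p a b n (fun t => ∑ i ∈ s, f i t) := by
  classical
  induction s using Finset.induction with
  | empty => simpa using memW_const (0 : E) n
  | insert i s his ih =>
    refine ((hf i (s.mem_insert_self i)).add hab hp
      (ih fun j hj => hf j (Finset.mem_insert_of_mem hj))).congr hab fun t _ => ?_
    rw [Finset.sum_insert his]

theorem memW_derivWithin (hab : a < b) (hp : 1 ≤ p) {n : ℕ} {f : ℝ → E}
    (hf : MemW p a b (n + 1) f) : MemW p a b n (derivWithin f (Icc a b)) := by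
  obtain ⟨g, hfg, hg⟩ := memW_succ_iff.1 hf
  cases n with
  | zero =>
    exact (memLp_congr_ae (hfg.ae_derivWithin_eq (hg.integrableOn hab.le hp))).2 hg
  | succ n =>
    exact hg.congr hab.le fun t ht =>
      (hfg.derivWithin_eq_of_continuousOn hab (hg.continuousOn hab.le hp) ht).symm

theorem MemW.isPrimitiveOn_derivWithin (hab : a ≤ b) (hp : 1 ≤ p) {n : ℕ} {f : ℝ → E}
    (hf : MemW p a b (n + 1) f) : IsPrimitiveOn f (derivWithin f (Icc a b)) a b :=
  let ⟨_, hfg, hg⟩ := memW_succ_iff.1 hf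
  hfg.derivWithin (hg.integrableOn hab hp)

end Sobolev

section SobolevAlgebra

variable {p : ℝ≥0∞} {a b : ℝ}

theorem MemW.mul_continuousOn {f g : ℝ → ℂ} (hf : MemW p a b 0 f)
    (hg : ContinuousOn g (Icc a b)) : MemW p a b 0 (fun t => f t * g t) := by
  obtain ⟨C, hC⟩ := isCompact_Icc.exists_bound_of_continuousOn hg
  refine (memW_zero_iff.1 hf).of_le_mul (c := C)
    ((memW_zero_iff.1 hf).aestronglyMeasurable.mul (hg.aestronglyMeasurable measurableSet_Icc))
    (ae_restrict_of_forall_mem measurableSet_Icc fun t ht => ?_)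
  rw [norm_mul, mul_comm C]
  exact mul_le_mul_of_nonneg_left (hC t ht) (norm_nonneg _)

theorem MemW.mul (hab : a ≤ b) (hp : 1 ≤ p) :
    ∀ {n} {f g : ℝ → ℂ}, MemW p a b (n + 1) f → MemW p a b (n + 1) g →
      MemW p a b (n + 1) (fun t => f t * g t)
  | n, f, g, hf, hg => by
    obtain ⟨u, hfu, hu⟩ := memW_succ_iff.1 hf
    obtain ⟨v, hgv, hv⟩ := memW_succ_iff.1 hg
    refine memW_succ_iff.2
      ⟨_, hfu.mul hab hgv (hu.integrableOn hab hp) (hv.integrableOn hab hp), ?_⟩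
    have hfv : MemW p a b n (fun s => v s * f s) → MemW p a b n (fun s => f s * v s) :=
      fun h => h.congr hab fun s _ => mul_comm _ _
    cases n with
    | zero =>
      exact (hu.mul_continuousOn (hg.continuousOn hab hp)).add hab hp
        (hfv (hv.mul_continuousOn (hf.continuousOn hab hp)))
    | succ n =>
      exact (hu.mul hab hp (hg.of_succ hab hp)).add hab hp
        (hfv (hv.mul hab hp (hf.of_succ hab hp)))

theorem MemW.mul_of_succ (hab : a ≤ b) (hp : 1 ≤ p) {n : ℕ} {f g : ℝ → ℂ}
    (hf : MemW p a b n f) (hg : MemW p a b (n + 1) g) : MemW p a b n (fun t => f t * g t) := by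
  cases n with
  | zero => exact hf.mul_continuousOn (hg.continuousOn hab hp)
  | succ n => exact hf.mul hab hp (hg.of_succ hab hp)

theorem memW_prod {ι : Type*} (hab : a ≤ b) (hp : 1 ≤ p) {n : ℕ} (s : Finset ι)
    (f : ι → ℝ → ℂ) (hf : ∀ i ∈ s, MemW p a b (n + 1) (f i)) :
    MemW p a b (n + 1) (fun t => ∏ i ∈ s, f i t) := by
  classical
  induction s using Finset.induction with
  | empty => simpa using memW_const (1 : ℂ) (n + 1)
  | insert i s his ih =>
    refine ((hf i (s.mem_insert_self i)).mul hab hp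
      (ih fun j hj => hf j (Finset.mem_insert_of_mem hj))).congr hab fun t _ => ?_
    rw [Finset.prod_insert his]

theorem MemW.inv (hab : a ≤ b) (hp : 1 ≤ p) :
    ∀ {n} {d : ℝ → ℂ}, MemW p a b (n + 1) d → (∀ t ∈ Icc a b, d t ≠ 0) →
      MemW p a b (n + 1) (fun t => (d t)⁻¹)
  | n, d, hd, hne => by
    obtain ⟨u, hdu, hu⟩ := memW_succ_iff.1 hd
    refine memW_succ_iff.2 ⟨_, hdu.inv hab (hu.integrableOn hab hp) hne, MemW.neg ?_⟩
    cases n with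
    | zero =>
      have hinvc := (hd.continuousOn hab hp).inv₀ hne
      exact hu.mul_continuousOn (hinvc.mul hinvc)
    | succ n =>
      have hinv := (hd.of_succ hab hp).inv hab hp hne
      exact hu.mul hab hp (hinv.mul hab hp hinv)

end SobolevAlgebra

section SobolevMatrix

variable {p : ℝ≥0∞} {a b : ℝ} {ι : Type*} [Fintype ι] [DecidableEq ι]
  {n : ℕ} {M : ℝ → Matrix ι ι ℂ}

theorem memW_det (hab : a ≤ b) (hp : 1 ≤ p) (hM : ∀ i j, MemW p a b (n + 1) (fun t => M t i j)) :
    MemW p a b (n + 1) (fun t => (M t).det) :=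
  (memW_sum hab hp Finset.univ _ fun σ _ => (memW_const _ _).mul hab hp
    (memW_prod hab hp Finset.univ _ fun i _ => hM (σ i) i)).congr hab
    fun t _ => (Matrix.det_apply' (M t)).symm

theorem memW_adjugate (hab : a ≤ b) (hp : 1 ≤ p)
    (hM : ∀ i j, MemW p a b (n + 1) (fun t => M t i j)) (i j : ι) :
    MemW p a b (n + 1) (fun t => (M t).adjugate i j) := by
  have hrow : ∀ k l, MemW p a b (n + 1) (fun t => (M t).updateRow j (Pi.single i 1) k l) := by
    intro k l
    by_cases hk : k = j
    · exact (memW_const _ _).congr hab fun t _ => by rw [Matrix.updateRow_apply, if_pos hk]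
    · exact (hM k l).congr hab fun t _ => by rw [Matrix.updateRow_apply, if_neg hk]
  exact (memW_det hab hp hrow).congr hab fun t _ => (Matrix.adjugate_apply _ i j).symm

theorem memW_inv_apply (hab : a ≤ b) (hp : 1 ≤ p)
    (hM : ∀ i j, MemW p a b (n + 1) (fun t => M t i j))
    (hdet : ∀ t ∈ Icc a b, (M t).det ≠ 0) (i j : ι) :
    MemW p a b (n + 1) (fun t => (M t)⁻¹ i j) :=
  ((memW_det hab hp hM).inv hab hp hdet |>.mul hab hp (memW_adjugate hab hp hM i j)).congr hab
    fun t _ => by rw [Matrix.inv_def, Matrix.smul_apply, Ring.inverse_eq_inv, smul_eq_mul]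

end SobolevMatrix

section Matricant

variable {ι : Type*} [Fintype ι] {a b : ℝ}

theorem sum_norm_mul_apply_le {R : Type*} [NormedRing R] (A B : Matrix ι ι R) :
    ∑ i, ∑ j, ‖(A * B) i j‖ ≤ (∑ i, ∑ l, ‖A i l‖) * ∑ l, ∑ j, ‖B l j‖ :=
  calc ∑ i, ∑ j, ‖(A * B) i j‖ ≤ ∑ i, ∑ j, ∑ l, ‖A i l‖ * ‖B l j‖ := by
        gcongr with i _ j _
        rw [Matrix.mul_apply]
        exact (norm_sum_le _ _).trans (Finset.sum_le_sum fun l _ => norm_mul_le _ _)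
    _ = ∑ i, ∑ l, ‖A i l‖ * ∑ j, ‖B l j‖ := by
        simp only [Finset.mul_sum]
        exact Finset.sum_congr rfl fun i _ => Finset.sum_comm
    _ ≤ ∑ i, ∑ l, ‖A i l‖ * ∑ l, ∑ j, ‖B l j‖ := by
        refine Finset.sum_le_sum fun i _ => Finset.sum_le_sum fun l _ =>
          mul_le_mul_of_nonneg_left ?_ (norm_nonneg _)
        exact Finset.single_le_sum (f := fun l => ∑ j, ‖B l j‖)
          (fun _ _ => Finset.sum_nonneg fun _ _ => norm_nonneg _) (Finset.mem_univ l)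
    _ = (∑ i, ∑ l, ‖A i l‖) * ∑ l, ∑ j, ‖B l j‖ := by simp only [Finset.sum_mul]

theorem integrableOn_mul_apply {A M : ℝ → Matrix ι ι ℂ}
    (hA : ∀ i j, IntegrableOn (fun s => A s i j) (Icc a b))
    (hM : ∀ i j, ContinuousOn (fun s => M s i j) (Icc a b)) (i j : ι) :
    IntegrableOn (fun s => (A s * M s) i j) (Icc a b) := by
  simp only [Matrix.mul_apply]
  exact integrable_finsetSum _ fun l _ => (hA i l).mul_continuousOn (hM l j) isCompact_Icc

theorem eq_zero_of_eq_neg_integral_mul (hab : a ≤ b) {A D : ℝ → Matrix ι ι ℂ}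
    (hA : ∀ i j, IntegrableOn (fun s => A s i j) (Icc a b))
    (hD : ∀ i j, ContinuousOn (fun s => D s i j) (Icc a b))
    (heq : ∀ i j, ∀ t ∈ Icc a b, D t i j = -∫ s in a..t, (A s * D s) i j) :
    ∀ t ∈ Icc a b, D t = 0 := by
  set ψ : ℝ → ℝ := fun s => ∑ i, ∑ j, ‖D s i j‖
  set w : ℝ → ℝ := fun s => ∑ i, ∑ l, ‖A s i l‖
  have hψ : ContinuousOn ψ (Icc a b) :=
    continuousOn_finsetSum _ fun i _ => continuousOn_finsetSum _ fun j _ => (hD i j).norm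
  have hw : IntegrableOn w (Icc a b) :=
    integrable_finsetSum _ fun i _ => integrable_finsetSum _ fun l _ => (hA i l).norm
  have hAD : ∀ i j, IntegrableOn (fun s => ‖(A s * D s) i j‖) (Icc a b) :=
    fun i j => (integrableOn_mul_apply hA hD i j).norm
  have hψ0 : ∀ t ∈ Icc a b, ψ t = 0 := by
    refine eq_zero_of_le_integral_mul hab hψ (fun _ _ => by positivity) hw
      (fun _ _ => by positivity) fun t ht => ?_
    have hint : ∀ {F : ℝ → ℝ}, IntegrableOn F (Icc a b) → IntervalIntegrable F volume a t :=
      fun hF => intervalIntegrable_of_integrableOn_Icc hF (left_mem_Icc.2 hab) ht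
    calc ψ t = ∑ i, ∑ j, ‖∫ s in a..t, (A s * D s) i j‖ :=
          Finset.sum_congr rfl fun i _ => Finset.sum_congr rfl fun j _ => by
            rw [heq i j t ht, norm_neg]
      _ ≤ ∑ i, ∑ j, ∫ s in a..t, ‖(A s * D s) i j‖ := by
          gcongr
          exact intervalIntegral.norm_integral_le_integral_norm ht.1
      _ = ∫ s in a..t, ∑ i, ∑ j, ‖(A s * D s) i j‖ := by
          rw [intervalIntegral.integral_finsetSum fun i _ =>
            hint (integrable_finsetSum _ fun j _ => hAD i j)]
          exact Finset.sum_congr rfl fun i _ =>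
            (intervalIntegral.integral_finsetSum fun j _ => hint (hAD i j)).symm
      _ ≤ ∫ s in a..t, w s * ψ s :=
          intervalIntegral.integral_mono_on ht.1
            (hint (integrable_finsetSum _ fun i _ => integrable_finsetSum _ fun j _ => hAD i j))
            (hint (hw.mul_continuousOn hψ isCompact_Icc)) fun s _ => sum_norm_mul_apply_le _ _
  intro t ht
  ext i j
  have hrow := (Finset.sum_eq_zero_iff_of_nonneg fun _ _ => by positivity).1 (hψ0 t ht) i
    (Finset.mem_univ i)
  exact norm_eq_zero.1 <|
    (Finset.sum_eq_zero_iff_of_nonneg fun _ _ => norm_nonneg _).1 hrow j (Finset.mem_univ j)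

theorem IsMatricant.unique {m : ℕ} (hab : a ≤ b) {A Y Z : ℝ → Matrix (Fin m) (Fin m) ℂ}
    (hA : ∀ i j, IntegrableOn (fun s => A s i j) (Icc a b))
    (hY : IsMatricant a b A Y) (hZ : IsMatricant a b A Z) : ∀ t ∈ Icc a b, Z t = Y t := by
  obtain ⟨hYc, -, hYeq⟩ := hY
  obtain ⟨hZc, -, hZeq⟩ := hZ
  have hDc : ∀ i j, ContinuousOn (fun s => (Z s - Y s) i j) (Icc a b) :=
    fun i j => (hZc i j).sub (hYc i j)
  suffices h : ∀ t ∈ Icc a b, Z t - Y t = 0 from fun t ht => sub_eq_zero.1 (h t ht)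
  refine eq_zero_of_eq_neg_integral_mul hab hA hDc fun i j t ht => ?_
  have hint : ∀ {X : ℝ → Matrix (Fin m) (Fin m) ℂ},
      (∀ i j, ContinuousOn (fun s => X s i j) (Icc a b)) →
        IntervalIntegrable (fun s => (A s * X s) i j) volume a t := fun hX =>
    intervalIntegrable_of_integrableOn_Icc (integrableOn_mul_apply hA hX i j)
      (left_mem_Icc.2 hab) ht
  have hsplit : ∫ s in a..t, (A s * (Z s - Y s)) i j
      = (∫ s in a..t, (A s * Z s) i j) - ∫ s in a..t, (A s * Y s) i j := by
    rw [← intervalIntegral.integral_sub (hint hZc) (hint hYc)]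
    simp only [Matrix.mul_sub, Matrix.sub_apply]
  rw [hsplit, Matrix.sub_apply, hZeq i j t ht, hYeq i j t ht]
  ring

end Matricant

section Coefficient

variable {p : ℝ≥0∞} {a b : ℝ} {m k : ℕ} {Y : ℝ → Matrix (Fin m) (Fin m) ℂ}

theorem memW_neg_matDeriv_mul_inv (hab : a < b) (hp : 1 ≤ p)
    (hY : ∀ i j, MemW p a b (k + 1) (fun t => Y t i j)) (hdet : ∀ t ∈ Icc a b, (Y t).det ≠ 0)
    (i j : Fin m) : MemW p a b k (fun t => (-(matDeriv a b Y t * (Y t)⁻¹)) i j) :=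
  (memW_sum hab.le hp Finset.univ _ fun l _ => (memW_derivWithin hab hp (hY i l)).mul_of_succ
    hab.le hp (memW_inv_apply hab.le hp hY hdet l j)).neg.congr hab.le fun t _ => by
      simp [matDeriv, Matrix.mul_apply]

theorem isMatricant_neg_matDeriv_mul_inv (hab : a < b) (hp : 1 ≤ p)
    (hY : ∀ i j, MemW p a b (k + 1) (fun t => Y t i j)) (hYa : Y a = 1)
    (hdet : ∀ t ∈ Icc a b, (Y t).det ≠ 0) :
    IsMatricant a b (fun t => -(matDeriv a b Y t * (Y t)⁻¹)) Y := by
  refine ⟨fun i j => (hY i j).continuousOn hab.le hp, hYa, fun i j t ht => ?_⟩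
  have hAY : ∀ s ∈ Icc a b, (-(matDeriv a b Y s * (Y s)⁻¹) * Y s) i j
      = -derivWithin (fun u => Y u i j) (Icc a b) s := fun s hs => by
    rw [Matrix.neg_mul, Matrix.mul_assoc,
      Matrix.nonsing_inv_mul _ (isUnit_iff_ne_zero.2 (hdet s hs)), Matrix.mul_one, Matrix.neg_apply]
    rfl
  rw [intervalIntegral.integral_congr fun s hs =>
      hAY s (uIcc_subset_Icc (left_mem_Icc.2 hab.le) ht hs),
    intervalIntegral.integral_neg, sub_neg_eq_add, ← hYa]
  exact (hY i j).isPrimitiveOn_derivWithin hab.le hp t ht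

end Coefficient

theorem stmt7 (p : ℝ≥0∞) (a b : ℝ) (hab : a < b) (hp : 1 ≤ p) (n m : ℕ) (hn : 1 ≤ n)
    (Y : ℝ → Matrix (Fin m) (Fin m) ℂ)
    (hY : ∀ i j, MemW p a b n (fun t => Y t i j))
    (hYa : Y a = 1) (hdet : ∀ t ∈ Icc a b, (Y t).det ≠ 0) :
    (∀ i j, MemW p a b (n - 1) (fun t => (-(matDeriv a b Y t * (Y t)⁻¹)) i j)) ∧
    IsMatricant a b (fun t => -(matDeriv a b Y t * (Y t)⁻¹)) Y ∧
    ∀ Z, IsMatricant a b (fun t => -(matDeriv a b Y t * (Y t)⁻¹)) Z →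
      ∀ t ∈ Icc a b, Z t = Y t := by
  obtain ⟨k, rfl⟩ : ∃ k, n = k + 1 := ⟨n - 1, by omega⟩
  have hA := memW_neg_matDeriv_mul_inv hab hp hY hdet
  have hAY := isMatricant_neg_matDeriv_mul_inv hab hp hY hYa hdet
  exact ⟨hA, hAY, fun Z hZ => hAY.unique hab.le (fun i j => (hA i j).integrableOn hab.le hp) hZ⟩
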